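/- arXiv:2604.11393 — 2 statements merged into one kernel-verified Lean document; each statement's English description precedes it below -/
import Mathlib

section
/- Let F be a symmetric positive semidefinite n×n real matrix and K a symmetric positive semidefinite n×n real matrix, let X be an n×p matrix and Y ∈ ℝⁿ, and λ > 0. Define f(α, β) = (Y − Xβ − Kα)ᵀ F (Y − Xβ − Kα) + n²λ αᵀKα. If F is positive definite and X has full column rank, then f is strictly convex on N(K)^⊥ × ℝᵖ, where N(K) is the null space of K; consequently f has at most one minimizer on N(K)^⊥ × ℝᵖ. -/
open Matrix

lemma quad_combo {n : ℕ} (M : Matrix (Fin n) (Fin n) ℝ)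
    (v w : Fin n → ℝ) (γ : ℝ) :
    (γ • v + (1 - γ) • w) ⬝ᵥ M *ᵥ (γ • v + (1 - γ) • w)
      = γ * (v ⬝ᵥ M *ᵥ v) + (1 - γ) * (w ⬝ᵥ M *ᵥ w)
        - γ * (1 - γ) * ((v - w) ⬝ᵥ M *ᵥ (v - w)) := by
  simp only [mulVec_add, mulVec_smul, mulVec_sub, add_dotProduct, sub_dotProduct,
    dotProduct_add, dotProduct_sub, smul_dotProduct, dotProduct_smul, smul_eq_mul]
  ring

/-- Strict convexity of the penalized objective
`f(α,β) = (Y−Xβ−Kα)ᵀF(Y−Xβ−Kα) + n²λ αᵀKα` on `N(K)ᗮ × ℝᵖ` when `F` is positive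
definite and `X` has full column rank, and the resulting uniqueness of a
minimizer on `N(K)ᗮ × ℝᵖ`. -/
theorem stmt3 (n p : ℕ) (F K : Matrix (Fin n) (Fin n) ℝ) (X : Matrix (Fin n) (Fin p) ℝ)
    (Y : Fin n → ℝ) (lam : ℝ) (hlam : 0 < lam)
    (hF : F.PosDef) (hK : K.PosSemidef)
    (hX : Function.Injective X.mulVec)
    (f : (Fin n → ℝ) → (Fin p → ℝ) → ℝ)
    (hf : ∀ α β, f α β =
      dotProduct (Y - X.mulVec β - K.mulVec α)
        (F.mulVec (Y - X.mulVec β - K.mulVec α))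
      + (n : ℝ) ^ 2 * lam * dotProduct α (K.mulVec α))
    (Nperp : Set (Fin n → ℝ))
    (hNperp : Nperp = {α | ∀ γ, K.mulVec γ = 0 → dotProduct α γ = 0}) :
    (∀ α₁ β₁ α₂ β₂, α₁ ∈ Nperp → α₂ ∈ Nperp → (α₁, β₁) ≠ (α₂, β₂) →
      ∀ γ : ℝ, 0 < γ → γ < 1 →
        f (γ • α₁ + (1 - γ) • α₂) (γ • β₁ + (1 - γ) • β₂)
          < γ * f α₁ β₁ + (1 - γ) * f α₂ β₂) ∧
    (∀ α₁ β₁ α₂ β₂, α₁ ∈ Nperp → α₂ ∈ Nperp →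
      (∀ α β, α ∈ Nperp → f α₁ β₁ ≤ f α β) →
      (∀ α β, α ∈ Nperp → f α₂ β₂ ≤ f α β) → (α₁, β₁) = (α₂, β₂)) := by
  have key : ∀ α₁ β₁ α₂ β₂, α₁ ∈ Nperp → α₂ ∈ Nperp → (α₁, β₁) ≠ (α₂, β₂) →
      ∀ γ : ℝ, 0 < γ → γ < 1 →
        f (γ • α₁ + (1 - γ) • α₂) (γ • β₁ + (1 - γ) • β₂)
          < γ * f α₁ β₁ + (1 - γ) * f α₂ β₂ := by
    intro α₁ β₁ α₂ β₂ h₁ h₂ hne γ hγ0 hγ1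
    set r₁ : Fin n → ℝ := Y - X.mulVec β₁ - K.mulVec α₁ with hr₁
    set r₂ : Fin n → ℝ := Y - X.mulVec β₂ - K.mulVec α₂ with hr₂
    have hres : Y - X.mulVec (γ • β₁ + (1 - γ) • β₂) - K.mulVec (γ • α₁ + (1 - γ) • α₂)
        = γ • r₁ + (1 - γ) • r₂ := by
      funext i
      simp [hr₁, hr₂, mulVec_add, mulVec_smul]
      ring
    set d : Fin n → ℝ := α₁ - α₂ with hd
    set D : ℝ := (r₁ - r₂) ⬝ᵥ F *ᵥ (r₁ - r₂) + (n : ℝ) ^ 2 * lam * (d ⬝ᵥ K *ᵥ d) with hD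
    have hcombo : f (γ • α₁ + (1 - γ) • α₂) (γ • β₁ + (1 - γ) • β₂)
        = γ * f α₁ β₁ + (1 - γ) * f α₂ β₂ - γ * (1 - γ) * D := by
      rw [hf, hf, hf, hres, quad_combo, quad_combo]
      simp only [hD, hd]
      ring
    have hDpos : 0 < D := by
      rcases eq_or_ne d 0 with hdz | hdz
      · -- α₁ = α₂, so β₁ ≠ β₂
        have hαeq : α₁ = α₂ := by rwa [hd, sub_eq_zero] at hdz
        have hβne : β₁ ≠ β₂ := by
          intro hb; exact hne (by rw [hαeq, hb])
        have hrne : r₁ - r₂ ≠ 0 := by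
          intro h
          have : X.mulVec β₂ - X.mulVec β₁ = 0 := by
            have := h
            simp only [hr₁, hr₂, hαeq] at this
            funext i
            have := congrFun this i
            simp [Pi.sub_apply] at this ⊢
            linarith
          have : X.mulVec β₁ = X.mulVec β₂ := by
            have h' := sub_eq_zero.mp this; exact h'.symm
          exact hβne (hX this)
        have h1 : 0 < (r₁ - r₂) ⬝ᵥ F *ᵥ (r₁ - r₂) := by
          have := hF.dotProduct_mulVec_pos hrne
          simpa using this
        have h2 : 0 ≤ d ⬝ᵥ K *ᵥ d := by simpa using hK.dotProduct_mulVec_nonneg d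
        have := mul_nonneg (by positivity : (0:ℝ) ≤ (n : ℝ) ^ 2 * lam) h2
        rw [hD]; nlinarith
      · -- d ≠ 0, show d ⬝ K d > 0
        have h2 : 0 < d ⬝ᵥ K *ᵥ d := by
          rcases lt_or_eq_of_le (by simpa using hK.dotProduct_mulVec_nonneg d) with h | h
          · exact h
          · exfalso
            have hKd : K.mulVec d = 0 := by
              have := (hK.dotProduct_mulVec_zero_iff d).mp (by simpa using h.symm)
              exact this
            rw [hNperp] at h₁ h₂
            have e1 := h₁ d hKd
            have e2 := h₂ d hKd
            have : d ⬝ᵥ d = 0 := by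
              have : (α₁ - α₂) ⬝ᵥ d = 0 := by
                rw [sub_dotProduct, e1, e2, sub_zero]
              simpa [hd] using this
            exact hdz (dotProduct_self_eq_zero.mp this)
        have h1 : 0 ≤ (r₁ - r₂) ⬝ᵥ F *ᵥ (r₁ - r₂) := by
          simpa using hF.posSemidef.dotProduct_mulVec_nonneg (r₁ - r₂)
        have hn : 0 < n := by
          rcases Nat.eq_zero_or_pos n with h | h
          · exact absurd (funext fun i => absurd i.2 (by omega)) hdz
          · exact h
        have hn' : (0:ℝ) < (n:ℝ) ^ 2 * lam := by
          have : (0:ℝ) < (n:ℝ) := by exact_mod_cast hn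
          positivity
        rw [hD]; nlinarith
    rw [hcombo]
    have : 0 < γ * (1 - γ) * D := mul_pos (mul_pos hγ0 (by linarith)) hDpos
    linarith
  refine ⟨key, ?_⟩
  intro α₁ β₁ α₂ β₂ h₁ h₂ hmin₁ hmin₂
  by_contra hne
  set c : ℝ := 1/2 with hc
  have hmid : c • α₁ + (1 - c) • α₂ ∈ Nperp := by
    rw [hNperp] at h₁ h₂ ⊢
    intro γ hγ
    have e1 := h₁ γ hγ; have e2 := h₂ γ hγ
    rw [add_dotProduct, smul_dotProduct, smul_dotProduct, smul_eq_mul, smul_eq_mul,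
      e1, e2, mul_zero, mul_zero, add_zero]
  have hlt := key α₁ β₁ α₂ β₂ h₁ h₂ hne c (by norm_num [hc]) (by norm_num [hc])
  have le1 := hmin₁ _ (c • β₁ + (1 - c) • β₂) hmid
  have le2 := hmin₂ _ (c • β₁ + (1 - c) • β₂) hmid
  have e12 : f α₁ β₁ = f α₂ β₂ :=
    le_antisymm (hmin₁ α₂ β₂ h₂) (hmin₂ α₁ β₁ h₁)
  have hsum : c * f α₁ β₁ + (1 - c) * f α₂ β₂ = f α₂ β₂ := by rw [e12]; ring
  rw [hsum] at hlt
  linarith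
end

section
/- Let C : X → Y be a compact linear operator between Hilbert spaces with singular system (μⱼ, φⱼ, ψⱼ), and let φ ∈ R((C*C)^{γ/2}) for some γ > 0, i.e. Σⱼ μⱼ^{−2γ} |⟨φ, φⱼ⟩|² < ∞. Then as λ ↓ 0, ‖λ (λI + C*C)^{-1} φ‖_X = O(λ^{min(γ,2)/2}). -/
private lemma tikhonov_key {lam t β : ℝ} (hlam : 0 < lam) (ht : 0 < t)
    (hβ0 : 0 < β) (hβ2 : β ≤ 2) :
    lam * t ^ (β / 2) ≤ lam ^ (β / 2) * (lam + t) := by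
  have h1 : lam ^ (1 - β / 2) ≤ (lam + t) ^ (1 - β / 2) :=
    Real.rpow_le_rpow hlam.le (by linarith) (by linarith)
  have h2 : t ^ (β / 2) ≤ (lam + t) ^ (β / 2) :=
    Real.rpow_le_rpow ht.le (by linarith) (by linarith)
  have e1 : β / 2 + (1 - β / 2) = 1 := by ring
  calc lam * t ^ (β / 2) = lam ^ (β / 2) * (lam ^ (1 - β / 2) * t ^ (β / 2)) := by
        rw [← mul_assoc, ← Real.rpow_add hlam, e1, Real.rpow_one]
    _ ≤ lam ^ (β / 2) * ((lam + t) ^ (1 - β / 2) * (lam + t) ^ (β / 2)) := by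
        refine mul_le_mul_of_nonneg_left ?_ (Real.rpow_nonneg hlam.le _)
        exact mul_le_mul h1 h2 (Real.rpow_nonneg ht.le _) (Real.rpow_nonneg (by linarith) _)
    _ = lam ^ (β / 2) * (lam + t) := by
        rw [← Real.rpow_add (by linarith), show (1 - β/2) + β/2 = 1 by ring, Real.rpow_one]

/-- Source-condition rate for Tikhonov regularization: if `C` is compact with
singular system `(μⱼ, φⱼ, ψⱼ)` and `φ ∈ R((C*C)^{γ/2})`, i.e.
`Σⱼ μⱼ^{−2γ} |⟨φ, φⱼ⟩|² < ∞` with `φ` in the closure of the span of the `φⱼ`,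
then `‖λ(λI + C*C)⁻¹φ‖ = O(λ^{min(γ,2)/2})` as `λ ↓ 0`. -/
theorem stmt11 {X Y : Type*} [NormedAddCommGroup X] [InnerProductSpace ℝ X] [CompleteSpace X]
    [NormedAddCommGroup Y] [InnerProductSpace ℝ Y] [CompleteSpace Y]
    (C : X →L[ℝ] Y) (hC : IsCompactOperator C)
    (μ : ℕ → ℝ) (φs : ℕ → X) (ψs : ℕ → Y)
    (hμ : ∀ j, 0 < μ j)
    (hφON : Orthonormal ℝ φs) (hψON : Orthonormal ℝ ψs)
    (hCφ : ∀ j, C (φs j) = μ j • ψs j)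
    (hCψ : ∀ j, C.adjoint (ψs j) = μ j • φs j)
    (γ : ℝ) (hγ : 0 < γ)
    (φ : X)
    (hφspan : φ ∈ (Submodule.span ℝ (Set.range φs)).topologicalClosure)
    (hsource : Summable (fun j => μ j ^ (-(2 * γ)) * (inner ℝ φ (φs j) : ℝ) ^ 2)) :
    ∃ M > (0 : ℝ), ∃ lam₀ > (0 : ℝ), ∀ lam : ℝ, 0 < lam → lam < lam₀ →
      ∀ R : X →L[ℝ] X,
        (C.adjoint ∘L C + lam • ContinuousLinearMap.id ℝ X) ∘L R
            = ContinuousLinearMap.id ℝ X →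
        R ∘L (C.adjoint ∘L C + lam • ContinuousLinearMap.id ℝ X)
            = ContinuousLinearMap.id ℝ X →
        ‖lam • R φ‖ ≤ M * lam ^ (min γ 2 / 2) := by
  classical
  set β : ℝ := min γ 2 with hβdef
  have hβpos : 0 < β := lt_min hγ two_pos
  have hβγ : β ≤ γ := min_le_left _ _
  have hβ2 : β ≤ 2 := min_le_right _ _
  have hμle : ∀ j, μ j ≤ ‖C‖ := by
    intro j
    have h1 : ‖C (φs j)‖ ≤ ‖C‖ * ‖φs j‖ := C.le_opNorm _
    rw [hCφ j, norm_smul, hψON.1 j, hφON.1 j, mul_one, mul_one,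
      Real.norm_eq_abs, abs_of_pos (hμ j)] at h1
    exact h1
  set K : ℝ := max 1 (‖C‖ ^ (2 * (γ - β))) with hKdef
  have hK1 : (1 : ℝ) ≤ K := le_max_left _ _
  have hK0 : (0 : ℝ) ≤ K := by linarith
  have hμK : ∀ j, μ j ^ (2 * (γ - β)) ≤ K := by
    intro j
    rcases le_or_gt (μ j) 1 with h | h
    · exact le_trans (Real.rpow_le_one (hμ j).le h (by linarith)) hK1
    · exact le_trans (Real.rpow_le_rpow (hμ j).le (hμle j) (by linarith)) (le_max_right _ _)
  set S : ℝ := ∑' j, μ j ^ (-(2 * γ)) * (inner ℝ φ (φs j) : ℝ) ^ 2 with hSdef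
  have hS0 : 0 ≤ S := tsum_nonneg fun j =>
    mul_nonneg (Real.rpow_nonneg (hμ j).le _) (sq_nonneg _)
  -- the Hilbert basis of the closed span
  set V : Submodule ℝ X := (Submodule.span ℝ (Set.range φs)).topologicalClosure with hVdef
  have hmemV : ∀ j, φs j ∈ V :=
    fun j => (Submodule.span ℝ (Set.range φs)).le_topologicalClosure
      (Submodule.subset_span ⟨j, rfl⟩)
  set e : ℕ → V := fun j => ⟨φs j, hmemV j⟩ with hedef
  have heON : Orthonormal ℝ e := hφON.codRestrict V hmemV
  have hesp : ⊤ ≤ (Submodule.span ℝ (Set.range e)).topologicalClosure := by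
    intro v _
    have himg : Subtype.val '' ((Submodule.span ℝ (Set.range e) : Submodule ℝ V) : Set V)
        = ((Submodule.span ℝ (Set.range φs) : Submodule ℝ X) : Set X) := by
      have h1 : Submodule.map V.subtype (Submodule.span ℝ (Set.range e))
          = Submodule.span ℝ (Set.range φs) := by
        rw [Submodule.map_span]
        congr 1
        ext x
        constructor
        · rintro ⟨y, ⟨j, rfl⟩, rfl⟩; exact ⟨j, rfl⟩
        · rintro ⟨j, rfl⟩; exact ⟨e j, ⟨j, rfl⟩, rfl⟩
      rw [← h1]; rfl
    have hv : (v : X) ∈ closure (Subtype.val ''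
        ((Submodule.span ℝ (Set.range e) : Submodule ℝ V) : Set V)) := by
      rw [himg]
      have hv2 : (v : X) ∈ ((Submodule.span ℝ (Set.range φs)).topologicalClosure : Set X) := v.2
      rwa [Submodule.topologicalClosure_coe] at hv2
    exact closure_subtype.mpr hv
  let hb : HilbertBasis ℕ ℝ V := HilbertBasis.mk heON hesp
  have hb_eq : ⇑hb = e := HilbertBasis.coe_mk _ _
  refine ⟨Real.sqrt (K * S) + 1, by positivity, 1, one_pos, ?_⟩
  intro lam hlam _ R h1 h2
  set u : X := R φ with hudef
  -- `u` solves the normal equation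
  have hTu : C.adjoint (C u) + lam • u = φ := by
    have := congrArg (fun (A : X →L[ℝ] X) => A φ) h1
    simpa using this
  have hCC : ∀ j, C.adjoint (C (φs j)) = (μ j ^ 2) • φs j := by
    intro j; rw [hCφ, map_smul, hCψ, smul_smul, sq]
  -- coefficient identity
  have hcoef : ∀ j, (inner ℝ (φs j) φ : ℝ) = (μ j ^ 2 + lam) * inner ℝ (φs j) u := by
    intro j
    have hA : (inner ℝ (φs j) (C.adjoint (C u)) : ℝ) = μ j ^ 2 * inner ℝ (φs j) u := by
      rw [ContinuousLinearMap.adjoint_inner_right, hCφ, real_inner_smul_left,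
        ← ContinuousLinearMap.adjoint_inner_left, hCψ, real_inner_smul_left]
      ring
    have : (inner ℝ (φs j) φ : ℝ)
        = inner ℝ (φs j) (C.adjoint (C u)) + lam * inner ℝ (φs j) u := by
      rw [← hTu, inner_add_right, real_inner_smul_right]
    rw [this, hA]; ring
  -- membership of `u` in the closed span
  have hmaps : Set.MapsTo R ((Submodule.span ℝ (Set.range φs) : Submodule ℝ X) : Set X)
      (V : Set X) := by
    intro y hy
    refine Submodule.span_induction ?_ ?_ ?_ ?_ hy
    · rintro _ ⟨j, rfl⟩
      have hpos : (0 : ℝ) < μ j ^ 2 + lam := by positivity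
      have hTφ : C.adjoint (C (φs j)) + lam • φs j = (μ j ^ 2 + lam) • φs j := by
        rw [hCC j, add_smul]
      have hR : R ((μ j ^ 2 + lam) • φs j) = φs j := by
        have h := congrArg (fun (A : X →L[ℝ] X) => A (φs j)) h2
        simp only [ContinuousLinearMap.comp_apply, ContinuousLinearMap.add_apply,
          ContinuousLinearMap.smul_apply, ContinuousLinearMap.id_apply] at h
        rw [← hTφ]
        exact h
      have hRφ : R (φs j) = (μ j ^ 2 + lam)⁻¹ • φs j := by
        calc R (φs j) = (μ j ^ 2 + lam)⁻¹ • R ((μ j ^ 2 + lam) • φs j) := by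
              rw [← map_smul, smul_smul, inv_mul_cancel₀ hpos.ne', one_smul]
          _ = (μ j ^ 2 + lam)⁻¹ • φs j := by rw [hR]
      rw [hRφ]
      exact V.smul_mem _ (hmemV j)
    · simpa using V.zero_mem
    · intro a b _ _ ha hb'
      rw [map_add]; exact V.add_mem ha hb'
    · intro c a _ ha
      rw [map_smul]; exact V.smul_mem _ ha
  have huV : u ∈ V := by
    have hφcl : φ ∈ closure ((Submodule.span ℝ (Set.range φs) : Submodule ℝ X) : Set X) := by
      have hv2 : φ ∈ ((Submodule.span ℝ (Set.range φs)).topologicalClosure : Set X) := hφspan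
      rwa [Submodule.topologicalClosure_coe] at hv2
    have hclos : u ∈ closure (V : Set X) := map_mem_closure R.continuous hφcl hmaps
    rwa [IsClosed.closure_eq (Submodule.isClosed_topologicalClosure _)] at hclos
  have hxV : lam • u ∈ V := V.smul_mem _ huV
  set xV : V := ⟨lam • u, hxV⟩ with hxVdef
  -- Parseval
  have hPars : HasSum (fun j => (inner ℝ (φs j) (lam • u) : ℝ) * inner ℝ (φs j) (lam • u))
      (‖lam • u‖ ^ 2) := by
    have h := hb.hasSum_inner_mul_inner xV xV
    have hxx : (inner ℝ xV xV : ℝ) = ‖lam • u‖ ^ 2 := by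
      rw [Submodule.coe_inner, real_inner_self_eq_norm_sq]
    rw [hxx] at h
    convert h using 2 with j
    · rfl
    rw [hb_eq, Submodule.coe_inner, Submodule.coe_inner]
    exact congrArg (· * _) (real_inner_comm _ _)
  -- termwise bound
  have hbound : ∀ j, (inner ℝ (φs j) (lam • u) : ℝ) * inner ℝ (φs j) (lam • u)
      ≤ (lam ^ β * K) * (μ j ^ (-(2 * γ)) * (inner ℝ φ (φs j) : ℝ) ^ 2) := by
    intro j
    set t : ℝ := μ j ^ 2 with htdef
    have ht : 0 < t := pow_pos (hμ j) 2
    set d : ℝ := inner ℝ (φs j) u with hddef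
    have hcd : (inner ℝ φ (φs j) : ℝ) = (t + lam) * d := by
      rw [real_inner_comm]; exact hcoef j
    have hlamd : (inner ℝ (φs j) (lam • u) : ℝ) = lam * d := real_inner_smul_right _ _ _
    -- scalar inequality : lam^2 ≤ (lam^β * K) * (μ^{-2γ} * (lam+t)^2)
    have hμβ : t ^ (β / 2) = μ j ^ β := by
      rw [htdef, ← Real.rpow_natCast (μ j) 2, ← Real.rpow_mul (hμ j).le]
      congr 1
      push_cast
      ring
    have hstep : lam * μ j ^ β ≤ lam ^ (β / 2) * (lam + t) := by
      rw [← hμβ]; exact tikhonov_key hlam ht hβpos hβ2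
    have hsq : (lam * μ j ^ β) ^ 2 ≤ (lam ^ (β / 2) * (lam + t)) ^ 2 := by
      have h0 : 0 ≤ lam * μ j ^ β := mul_nonneg hlam.le (Real.rpow_nonneg (hμ j).le _)
      exact pow_le_pow_left₀ h0 hstep 2
    have hW : (μ j ^ β) ^ 2 = μ j ^ (2 * β) := by
      rw [← Real.rpow_natCast (μ j ^ β) 2, ← Real.rpow_mul (hμ j).le]
      congr 1
      push_cast
      ring
    have hL : (lam ^ (β / 2)) ^ 2 = lam ^ β := by
      rw [← Real.rpow_natCast (lam ^ (β / 2)) 2, ← Real.rpow_mul hlam.le]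
      congr 1
      push_cast
      ring
    have h2sq : lam ^ 2 * μ j ^ (2 * β) ≤ lam ^ β * (lam + t) ^ 2 := by
      calc lam ^ 2 * μ j ^ (2 * β) = (lam * μ j ^ β) ^ 2 := by rw [mul_pow, hW]
        _ ≤ (lam ^ (β / 2) * (lam + t)) ^ 2 := hsq
        _ = lam ^ β * (lam + t) ^ 2 := by rw [mul_pow, hL]
    have hprod : μ j ^ (2 * β) * μ j ^ (2 * (γ - β)) * μ j ^ (-(2 * γ)) = 1 := by
      rw [← Real.rpow_add (hμ j), ← Real.rpow_add (hμ j),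
        show 2 * β + 2 * (γ - β) + -(2 * γ) = 0 by ring, Real.rpow_zero]
    have hP0 : (0 : ℝ) ≤ μ j ^ (-(2 * γ)) := Real.rpow_nonneg (hμ j).le _
    have hQ0 : (0 : ℝ) ≤ μ j ^ (2 * (γ - β)) := Real.rpow_nonneg (hμ j).le _
    have hmain : lam ^ 2 ≤ (lam ^ β * K) * (μ j ^ (-(2 * γ)) * (lam + t) ^ 2) := by
      calc lam ^ 2 = (lam ^ 2 * μ j ^ (2 * β)) * (μ j ^ (2 * (γ - β)) * μ j ^ (-(2 * γ))) := by
            rw [show (lam ^ 2 * μ j ^ (2 * β)) * (μ j ^ (2 * (γ - β)) * μ j ^ (-(2 * γ)))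
              = lam ^ 2 * (μ j ^ (2 * β) * μ j ^ (2 * (γ - β)) * μ j ^ (-(2 * γ))) by ring,
              hprod, mul_one]
        _ ≤ (lam ^ β * (lam + t) ^ 2) * (μ j ^ (2 * (γ - β)) * μ j ^ (-(2 * γ))) :=
            mul_le_mul_of_nonneg_right h2sq (mul_nonneg hQ0 hP0)
        _ = (lam ^ β * μ j ^ (2 * (γ - β))) * (μ j ^ (-(2 * γ)) * (lam + t) ^ 2) := by ring
        _ ≤ (lam ^ β * K) * (μ j ^ (-(2 * γ)) * (lam + t) ^ 2) := by
            refine mul_le_mul_of_nonneg_right ?_ (by positivity)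
            exact mul_le_mul_of_nonneg_left (hμK j) (Real.rpow_nonneg hlam.le _)
    calc (inner ℝ (φs j) (lam • u) : ℝ) * inner ℝ (φs j) (lam • u)
        = lam ^ 2 * d ^ 2 := by rw [hlamd]; ring
      _ ≤ ((lam ^ β * K) * (μ j ^ (-(2 * γ)) * (lam + t) ^ 2)) * d ^ 2 :=
          mul_le_mul_of_nonneg_right hmain (sq_nonneg d)
      _ = (lam ^ β * K) * (μ j ^ (-(2 * γ)) * ((t + lam) * d) ^ 2) := by ring
      _ = (lam ^ β * K) * (μ j ^ (-(2 * γ)) * (inner ℝ φ (φs j) : ℝ) ^ 2) := by rw [hcd]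
  -- sum up
  have hle : ‖lam • u‖ ^ 2 ≤ lam ^ β * K * S := by
    calc ‖lam • u‖ ^ 2 = ∑' j, (inner ℝ (φs j) (lam • u) : ℝ) * inner ℝ (φs j) (lam • u) :=
          hPars.tsum_eq.symm
      _ ≤ ∑' j, (lam ^ β * K) * (μ j ^ (-(2 * γ)) * (inner ℝ φ (φs j) : ℝ) ^ 2) :=
          Summable.tsum_le_tsum hbound hPars.summable (hsource.mul_left _)
      _ = lam ^ β * K * S := tsum_mul_left
  have hnorm : ‖lam • u‖ ≤ lam ^ (β / 2) * Real.sqrt (K * S) := by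
    have h := Real.sqrt_le_sqrt hle
    rw [Real.sqrt_sq (norm_nonneg _)] at h
    refine h.trans (le_of_eq ?_)
    rw [mul_assoc, Real.sqrt_mul (Real.rpow_nonneg hlam.le _)]
    congr 1
    rw [Real.sqrt_eq_rpow, ← Real.rpow_mul hlam.le]
    congr 1
    ring
  have hfin : lam ^ (β / 2) * Real.sqrt (K * S)
      ≤ (Real.sqrt (K * S) + 1) * lam ^ (β / 2) := by
    have h0 : (0 : ℝ) ≤ lam ^ (β / 2) := Real.rpow_nonneg hlam.le _
    nlinarith [Real.sqrt_nonneg (K * S)]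
  exact hnorm.trans hfin
end
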